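/- arXiv:1512.02503 — 5 statements merged into one kernel-verified Lean document; each statement's English description precedes it below -/
import Mathlib

section
/- In the commutative ring S = k[X1, X2, X3, X4]/(X3² - (X2² - X1²), X4² - (X2² - λ X1²)) over a field k, with λ = ε where ε² - ε + 1 = 0 and Δ ∈ k satisfies Δ² = 6ε - 3, the identity x4⁶ = (x2² + (ε-1)x1²)³ - (Δ x1 x2 x3)² holds, where xi denotes the image of Xi in S. -/
open MvPolynomial

/-- After substituting `c²` and `d²`, both sides are cubic forms in `a²` and `b²`; they agree
because `ε³ = -1` and `(ε - 1)² = -ε`, both consequences of `ε² - ε + 1 = 0`. -/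
theorem pow_six_eq_of_sq_eq {R : Type*} [CommRing R] {ε Δ a b c d : R}
    (hε : ε ^ 2 - ε + 1 = 0) (hΔ : Δ ^ 2 = 6 * ε - 3)
    (hc : c ^ 2 = b ^ 2 - a ^ 2) (hd : d ^ 2 = b ^ 2 - ε * a ^ 2) :
    d ^ 6 = (b ^ 2 + (ε - 1) * a ^ 2) ^ 3 - (Δ * a * b * c) ^ 2 := by
  linear_combination (d ^ 4 + d ^ 2 * (b ^ 2 - ε * a ^ 2) + (b ^ 2 - ε * a ^ 2) ^ 2) * hd
    + a ^ 2 * b ^ 2 * c ^ 2 * hΔ + (6 * ε - 3) * a ^ 2 * b ^ 2 * hc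
    + (1 - 2 * ε) * a ^ 6 * hε

theorem stmt_5 {k : Type*} [Field k] (ε Δ : k)
    (hε : ε ^ 2 - ε + 1 = 0) (hΔ : Δ ^ 2 = 6 * ε - 3)
    (I : Ideal (MvPolynomial (Fin 4) k))
    (hI : I = Ideal.span {X 2 ^ 2 - (X 1 ^ 2 - X 0 ^ 2),
                          X 3 ^ 2 - (X 1 ^ 2 - C ε * X 0 ^ 2)})
    (x : Fin 4 → MvPolynomial (Fin 4) k ⧸ I)
    (hx : ∀ i, x i = Ideal.Quotient.mk I (X i)) :
    x 3 ^ 6 =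
      (x 1 ^ 2 + algebraMap k _ (ε - 1) * x 0 ^ 2) ^ 3 -
        (algebraMap k _ Δ * x 0 * x 1 * x 2) ^ 2 := by
  have mk_eq {p q : MvPolynomial (Fin 4) k} (h : p - q ∈ ({X 2 ^ 2 - (X 1 ^ 2 - X 0 ^ 2),
      X 3 ^ 2 - (X 1 ^ 2 - C ε * X 0 ^ 2)} : Set _)) :
      Ideal.Quotient.mk I p = Ideal.Quotient.mk I q :=
    Ideal.Quotient.eq.2 (hI ▸ Ideal.subset_span h)
  have hx2 : x 2 ^ 2 = x 1 ^ 2 - x 0 ^ 2 := by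
    simpa only [hx, map_pow, map_sub] using mk_eq (Set.mem_insert _ _)
  have hx3 : x 3 ^ 2 = x 1 ^ 2 - algebraMap k _ ε * x 0 ^ 2 := by
    simpa only [hx, map_pow, map_sub, map_mul, ← MvPolynomial.algebraMap_eq,
      Ideal.Quotient.mk_algebraMap] using mk_eq (Set.mem_insert_of_mem _ rfl)
  rw [map_sub, map_one]
  refine pow_six_eq_of_sq_eq ?_ ?_ hx2 hx3
  · simpa using congrArg (algebraMap k (MvPolynomial (Fin 4) k ⧸ I)) hε
  · simpa [map_ofNat] using congrArg (algebraMap k (MvPolynomial (Fin 4) k ⧸ I)) hΔ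
end

section
/- In the commutative ring S = k[X1, X2, X3, X4]/(X3² - (X2² - X1²), X4² - (X2² - λ X1²)) over a field k with s ∈ k satisfying s² = 1 - λ, the identity (x2 x4)² - ((2-λ) - 2s)(x1 x3)² = (x2² - (1 - s)x1²)² holds, where xi denotes the image of Xi in S. -/
open MvPolynomial

theorem sq_mul_sub_eq_sq_of_sq_eq {R : Type*} [CommRing R] {a b c d lam s : R}
    (hs : s ^ 2 = 1 - lam) (hc : c ^ 2 = b ^ 2 - a ^ 2) (hd : d ^ 2 = b ^ 2 - lam * a ^ 2) :
    (b * d) ^ 2 - ((2 - lam) - 2 * s) * (a * c) ^ 2 = (b ^ 2 - (1 - s) * a ^ 2) ^ 2 := by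
  linear_combination b ^ 2 * hd - (2 - lam - 2 * s) * a ^ 2 * hc - a ^ 4 * hs

theorem stmt_8 {k : Type*} [Field k] (lam s : k) (hs : s ^ 2 = 1 - lam)
    (I : Ideal (MvPolynomial (Fin 4) k))
    (hI : I = Ideal.span {X 2 ^ 2 - (X 1 ^ 2 - X 0 ^ 2),
                          X 3 ^ 2 - (X 1 ^ 2 - C lam * X 0 ^ 2)})
    (x : Fin 4 → MvPolynomial (Fin 4) k ⧸ I)
    (hx : ∀ i, x i = Ideal.Quotient.mk I (X i)) :
    (x 1 * x 3) ^ 2 - algebraMap k _ ((2 - lam) - 2 * s) * (x 0 * x 2) ^ 2 =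
      (x 1 ^ 2 - algebraMap k _ (1 - s) * x 0 ^ 2) ^ 2 := by
  have relation_eq_zero : ∀ p ∈ ({X 2 ^ 2 - (X 1 ^ 2 - X 0 ^ 2),
      X 3 ^ 2 - (X 1 ^ 2 - C lam * X 0 ^ 2)} : Set (MvPolynomial (Fin 4) k)),
      Ideal.Quotient.mk I p = 0 := fun p hp =>
    Ideal.Quotient.eq_zero_iff_mem.mpr (hI ▸ Ideal.subset_span hp)
  have hc : x 2 ^ 2 = x 1 ^ 2 - x 0 ^ 2 := by
    simpa [hx, sub_eq_zero] using relation_eq_zero _ (.inl rfl)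
  have hd : x 3 ^ 2 = x 1 ^ 2 - algebraMap k _ lam * x 0 ^ 2 := by
    simpa [hx, sub_eq_zero, ← Ideal.Quotient.mk_algebraMap] using relation_eq_zero _ (.inr rfl)
  have hs' : algebraMap k (MvPolynomial (Fin 4) k ⧸ I) s ^ 2 = 1 - algebraMap k _ lam := by
    rw [← map_pow, hs, map_sub, map_one]
  simpa only [map_sub, map_mul, map_ofNat, map_one] using sq_mul_sub_eq_sq_of_sq_eq hs' hc hd
end

section
/- Let L(p) be the string group on generators x1, ..., xt with relations p1·x1 = ... = pt·xt = c (each pi ≥ 2). Then every element x of L(p) can be written uniquely as x = l·c + Σ li·xi with l ∈ ℤ and 0 ≤ li ≤ pi - 1 for each i. -/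
/-- Relations subgroup for the string group of weight type `p`:
generated by the elements `p i • x i - p 0 • x 0`. -/
noncomputable def stringRels (t : ℕ) (p : Fin (t + 1) → ℕ) :
    AddSubgroup (Fin (t + 1) →₀ ℤ) :=
  AddSubgroup.closure (Set.range fun i : Fin (t + 1) =>
    Finsupp.single i (p i : ℤ) - Finsupp.single 0 (p 0 : ℤ))

/-- The string group `L(p)`. -/
abbrev StringGroup (t : ℕ) (p : Fin (t + 1) → ℕ) :=
  (Fin (t + 1) →₀ ℤ) ⧸ stringRels t p

/-- The generator `x_i` of the string group. -/
noncomputable def gen (t : ℕ) (p : Fin (t + 1) → ℕ) (i : Fin (t + 1)) :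
    StringGroup t p :=
  QuotientAddGroup.mk (Finsupp.single i 1)

/-- The canonical element `c = p_i • x_i` of the string group. -/
noncomputable def can (t : ℕ) (p : Fin (t + 1) → ℕ) : StringGroup t p :=
  (p 0 : ℤ) • gen t p 0

/-!
Existence is division with remainder, `z • x i = (z / p i) • c + (z % p i) • x i`.
For uniqueness, `L(p)` maps to `ZMod (p j)` by `x i ↦ δ i j`, which reads off `l j` modulo `p j`,
and to `ℚ` by `x i ↦ 1 / p i`, which sends `c` to `1` and hence reads off `l`.
-/
namespace StringGroup

variable {t : ℕ} {p : Fin (t + 1) → ℕ}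

theorem mk_single (i : Fin (t + 1)) (z : ℤ) :
    (QuotientAddGroup.mk (Finsupp.single i z) : StringGroup t p) = z • gen t p i := by
  rw [gen, ← QuotientAddGroup.mk_zsmul, Finsupp.smul_single', mul_one]

theorem natCast_zsmul_gen (i : Fin (t + 1)) : (p i : ℤ) • gen t p i = can t p := by
  rw [can, ← mk_single, ← mk_single, QuotientAddGroup.eq_iff_sub_mem]
  exact AddSubgroup.subset_closure ⟨i, rfl⟩

theorem mk_eq_sum_zsmul_gen (f : Fin (t + 1) →₀ ℤ) :
    (QuotientAddGroup.mk f : StringGroup t p) = ∑ i, f i • gen t p i := by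
  conv_lhs => rw [← Finsupp.univ_sum_single f]
  simp only [QuotientAddGroup.mk_sum, mk_single]

noncomputable def ofCoeffs (l : ℤ) (ls : Fin (t + 1) → ℤ) : StringGroup t p :=
  l • can t p + ∑ i, ls i • gen t p i

theorem zsmul_gen_eq_ediv_add_emod (z : ℤ) (i : Fin (t + 1)) :
    z • gen t p i = (z / p i) • can t p + (z % p i) • gen t p i := by
  rw [← natCast_zsmul_gen i, ← mul_zsmul, ← add_zsmul, Int.ediv_mul_add_emod]

theorem exists_ofCoeffs_eq (hp : ∀ i, p i ≠ 0) (x : StringGroup t p) :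
    ∃ l ls, (∀ i, 0 ≤ ls i ∧ ls i < (p i : ℤ)) ∧ ofCoeffs l ls = x := by
  obtain ⟨f, rfl⟩ := QuotientAddGroup.mk_surjective x
  have hp' (i : Fin (t + 1)) : 0 < (p i : ℤ) := by have := hp i; omega
  refine ⟨∑ i, f i / p i, fun i => f i % p i,
    fun i => ⟨Int.emod_nonneg _ (hp' i).ne', Int.emod_lt_of_pos _ (hp' i)⟩, ?_⟩
  rw [mk_eq_sum_zsmul_gen]
  simp only [zsmul_gen_eq_ediv_add_emod (f _), Finset.sum_add_distrib, ofCoeffs]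
  exact congrArg (· + _) (map_sum (zmultiplesHom _ (can t p)) _ _)

noncomputable def lift {A : Type*} [AddCommGroup A] (a : Fin (t + 1) → A)
    (ha : ∀ i, (p i : ℤ) • a i = (p 0 : ℤ) • a 0) : StringGroup t p →+ A :=
  QuotientAddGroup.lift _ (Finsupp.linearCombination ℤ a).toAddMonoidHom <| by
    rw [stringRels, AddSubgroup.closure_le]
    rintro _ ⟨i, rfl⟩
    simp [ha i]

section lift

variable {A : Type*} [AddCommGroup A] (a : Fin (t + 1) → A)
  (ha : ∀ i, (p i : ℤ) • a i = (p 0 : ℤ) • a 0)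

@[simp] theorem lift_gen (i : Fin (t + 1)) : lift a ha (gen t p i) = a i := by
  simp [lift, gen]

@[simp] theorem lift_can : lift a ha (can t p) = (p 0 : ℤ) • a 0 := by
  simp [can]

end lift

noncomputable def residue (j : Fin (t + 1)) : StringGroup t p →+ ZMod (p j) :=
  have h (i : Fin (t + 1)) : (p i : ℤ) • (Pi.single j 1 : Fin (t + 1) → ZMod (p j)) i = 0 := by
    rcases eq_or_ne i j with rfl | hij
    · simp
    · simp [hij]
  lift (Pi.single j 1) fun i => (h i).trans (h 0).symm

theorem residue_can (j : Fin (t + 1)) : residue j (can t p) = 0 := by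
  simp [← natCast_zsmul_gen j, residue]

theorem residue_gen (i j : Fin (t + 1)) :
    residue j (gen t p i) = (Pi.single j 1 : Fin (t + 1) → ZMod (p j)) i := by
  simp [residue]

theorem residue_ofCoeffs (j : Fin (t + 1)) (l : ℤ) (ls : Fin (t + 1) → ℤ) :
    residue j (ofCoeffs l ls : StringGroup t p) = ls j := by
  simp [ofCoeffs, residue_can, residue_gen, Pi.single_apply]

noncomputable def degree (hp : ∀ i, p i ≠ 0) : StringGroup t p →+ ℚ :=
  lift (fun i => (p i : ℚ)⁻¹) fun i => by simp [hp]

theorem degree_can (hp : ∀ i, p i ≠ 0) : degree hp (can t p) = 1 := by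
  simp [degree, hp]

theorem eq_and_eq_of_ofCoeffs_eq (hp : ∀ i, p i ≠ 0) {l l' : ℤ} {ls ls' : Fin (t + 1) → ℤ}
    (hls : ∀ i, 0 ≤ ls i ∧ ls i < (p i : ℤ)) (hls' : ∀ i, 0 ≤ ls' i ∧ ls' i < (p i : ℤ))
    (h : (ofCoeffs l ls : StringGroup t p) = ofCoeffs l' ls') : l = l' ∧ ls = ls' := by
  have hls_eq : ls = ls' := by
    funext i
    have := congrArg (residue i) h
    rw [residue_ofCoeffs, residue_ofCoeffs, ZMod.intCast_eq_intCast_iff',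
      Int.emod_eq_of_lt (hls i).1 (hls i).2, Int.emod_eq_of_lt (hls' i).1 (hls' i).2] at this
    exact this
  subst hls_eq
  refine ⟨?_, rfl⟩
  have := congrArg (degree hp) (add_right_cancel h)
  simpa [degree_can] using this

end StringGroup

theorem stmt_10 (t : ℕ) (p : Fin (t + 1) → ℕ) (hp : ∀ i, 2 ≤ p i)
    (x : StringGroup t p) :
    ∃! lf : ℤ × (Fin (t + 1) → ℤ),
      (∀ i, 0 ≤ lf.2 i ∧ lf.2 i ≤ (p i : ℤ) - 1) ∧
      x = lf.1 • can t p + ∑ i, lf.2 i • gen t p i := by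
  have hp0 (i : Fin (t + 1)) : p i ≠ 0 := by have := hp i; omega
  simp only [Int.le_sub_one_iff]
  obtain ⟨l, ls, hls, rfl⟩ := StringGroup.exists_ofCoeffs_eq hp0 x
  refine ⟨(l, ls), ⟨hls, rfl⟩, ?_⟩
  rintro ⟨l', ls'⟩ ⟨hls', h⟩
  obtain ⟨rfl, rfl⟩ := StringGroup.eq_and_eq_of_ofCoeffs_eq hp0 hls' hls h.symm
  rfl
end

section
/- In the string group L(2,2,2,2) with generators x1, x2, x3, x4 and relations 2x1 = 2x2 = 2x3 = 2x4 = c, the dualizing element ω = 2c - x1 - x2 - x3 - x4 has order exactly 2. -/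
/-! Since `2 x_i = c` for every `i`, `2ω = 4c - 2x₁ - 2x₂ - 2x₃ - 2x₄ = 0`. On the other hand `ω ≠ 0`:
for each `i` the coordinate `x_i` modulo `p_i` is well defined on `L(p)`, because the relations
`p_j x_j - p_k x_k` have `i`-th coordinate `0` or `±p_i`; this projection `L(2,2,2,2) → ℤ/2`
kills `c = 2 x_i` and sends `ω` to `-1`. -/

namespace StringGroup

variable {t : ℕ} {p : Fin (t + 1) → ℕ}

theorem stringRels_le_ker_coord (i : Fin (t + 1)) :
    stringRels t p ≤ ((Int.castAddHom (ZMod (p i))).comp (Finsupp.applyAddHom i)).ker := by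
  rw [stringRels, AddSubgroup.closure_le]
  rintro _ ⟨j, rfl⟩
  by_cases hj : j = i <;> by_cases h0 : (0 : Fin (t + 1)) = i <;> simp [hj, h0]

noncomputable def coordMod (i : Fin (t + 1)) : StringGroup t p →+ ZMod (p i) :=
  QuotientAddGroup.lift _ _ (stringRels_le_ker_coord i)

theorem coordMod_gen (i j : Fin (t + 1)) :
    coordMod i (gen t p j) = if j = i then 1 else 0 := by
  by_cases h : j = i <;> simp [coordMod, gen, QuotientAddGroup.lift_mk, h]

theorem coordMod_can (i : Fin (t + 1)) : coordMod i (can t p) = 0 := by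
  rw [← natCast_zsmul_gen i, map_zsmul, natCast_zsmul, nsmul_eq_mul, ZMod.natCast_self, zero_mul]

end StringGroup

open StringGroup in
theorem stmt_13 :
    addOrderOf ((2 : ℤ) • can 3 ![2, 2, 2, 2] -
      gen 3 ![2, 2, 2, 2] 0 - gen 3 ![2, 2, 2, 2] 1 -
      gen 3 ![2, 2, 2, 2] 2 - gen 3 ![2, 2, 2, 2] 3) = 2 := by
  have hgen (i : Fin 4) : (2 : ℤ) • gen 3 ![2, 2, 2, 2] i = can 3 ![2, 2, 2, 2] := by
    fin_cases i <;> exact natCast_zsmul_gen _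
  apply addOrderOf_eq_prime
  · rw [← natCast_zsmul]
    linear_combination (norm := module) -(hgen 0 + hgen 1 + hgen 2 + hgen 3)
  · intro hω
    have hcoord := congrArg (coordMod (p := ![2, 2, 2, 2]) 1) hω
    simp only [map_sub, map_zsmul, coordMod_can, coordMod_gen, map_zero] at hcoord
    revert hcoord
    decide
end

section
/- The group endomorphism π of L(2,2,2,2) determined by π(x1) = x1 + x3, π(x2) = x2 + x4, π(x3) = π(x4) = c is well defined, and its kernel is the cyclic group of order 2 generated by x3 - x4. -/
/-!
For constant weight `n`, the relations of `L(n, …, n)` are exactly the integer vectors whose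
entries are divisible by `n` and sum to `0`. Lifting `π` to `ℤ⁴`, an element `∑ fᵢ xᵢ` lies in
its kernel iff `f₁, f₂` are even and `∑ fᵢ = 0`; then `∑ fᵢ xᵢ - f₃ (x₃ - x₄)` meets the
criterion, so the kernel is generated by `x₃ - x₄`. The same criterion gives `x₃ - x₄ ≠ 0` and
`2 (x₃ - x₄) = 0`. In Lean, `xᵢ` is `gen 3 ![2, 2, 2, 2] (i - 1)` and `fᵢ` is `f (i - 1)`.
-/

open Finsupp

theorem mem_stringRels_iff {t n : ℕ} {p : Fin (t + 1) → ℕ} (hp : ∀ i, p i = n)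
    (f : Fin (t + 1) →₀ ℤ) :
    f ∈ stringRels t p ↔ (∀ i, (n : ℤ) ∣ f i) ∧ ∑ i, f i = 0 := by
  have hR : stringRels t p =
      AddSubgroup.closure (Set.range fun i => single i (n : ℤ) - single 0 (n : ℤ)) := by
    simp only [stringRels, hp]
  rw [hR]
  constructor
  · intro hf
    induction hf using AddSubgroup.closure_induction with
    | mem _ hg =>
      obtain ⟨j, rfl⟩ := hg
      refine ⟨fun i => ?_, ?_⟩
      · simp only [coe_sub, Pi.sub_apply, single_apply]
        split_ifs <;> simp
      · simp [Finset.sum_sub_distrib, single_apply]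
    | zero => simp
    | add _ _ _ _ hf hg =>
      exact ⟨fun i => dvd_add (hf.1 i) (hg.1 i), by simp [Finset.sum_add_distrib, hf.2, hg.2]⟩
    | neg _ _ hf => exact ⟨fun i => dvd_neg.2 (hf.1 i), by simp [hf.2]⟩
  · rintro ⟨hdvd, hsum⟩
    have hf : f = ∑ i, (f i / n) • (single i (n : ℤ) - single 0 (n : ℤ)) := by
      simp only [smul_sub, smul_single, smul_eq_mul, Int.ediv_mul_cancel (hdvd _),
        Finset.sum_sub_distrib, univ_sum_single, ← single_finsetSum, hsum, single_zero, sub_zero]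
    rw [hf]
    exact AddSubgroup.sum_mem _ fun i _ =>
      AddSubgroup.zsmul_mem _ (AddSubgroup.subset_closure (Set.mem_range_self i)) _

theorem StringGroup.mk_eq_zero_iff {t n : ℕ} {p : Fin (t + 1) → ℕ} (hp : ∀ i, p i = n)
    (f : Fin (t + 1) →₀ ℤ) :
    (f : StringGroup t p) = 0 ↔ (∀ i, (n : ℤ) ∣ f i) ∧ ∑ i, f i = 0 :=
  (QuotientAddGroup.eq_zero_iff f).trans (mem_stringRels_iff hp f)

namespace L2222

local notation "L" => StringGroup 3 ![2, 2, 2, 2]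

theorem weight_eq_two (i : Fin 4) : ![2, 2, 2, 2] i = 2 := by
  fin_cases i <;> rfl

/-- `π` lifted to `ℤ⁴`, in coordinates; `c` is the class of `single 0 2`. -/
noncomputable def piFree : (Fin 4 →₀ ℤ) →+ (Fin 4 →₀ ℤ) where
  toFun f := equivFunOnFinite.symm ![f 0 + 2 * f 2 + 2 * f 3, f 1, f 0, f 1]
  map_zero' := by ext i; fin_cases i <;> simp
  map_add' f g := by ext i; fin_cases i <;> simp; ring

theorem mk_eq_zero_iff (f : Fin 4 →₀ ℤ) :
    (f : L) = 0 ↔ (2 ∣ f 0 ∧ 2 ∣ f 1 ∧ 2 ∣ f 2 ∧ 2 ∣ f 3) ∧ f 0 + f 1 + f 2 + f 3 = 0 := by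
  simp only [StringGroup.mk_eq_zero_iff weight_eq_two, Nat.reduceAdd, Nat.cast_ofNat,
    Fin.forall_fin_succ, Fin.succ_zero_eq_one, Fin.succ_one_eq_two, Fin.reduceSucc,
    IsEmpty.forall_iff, and_true, Fin.sum_univ_four]

theorem piFree_mk_eq_zero_iff (f : Fin 4 →₀ ℤ) :
    (piFree f : L) = 0 ↔ 2 ∣ f 0 ∧ 2 ∣ f 1 ∧ f 0 + f 1 + f 2 + f 3 = 0 := by
  rw [mk_eq_zero_iff]
  simp only [piFree, AddMonoidHom.coe_mk, ZeroHom.coe_mk, equivFunOnFinite_symm_apply_apply,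
    Matrix.cons_val_zero, Matrix.cons_val_one, Matrix.cons_val, Int.dvd_add_self_mul]
  omega

theorem stringRels_le_comap_piFree :
    stringRels 3 ![2, 2, 2, 2] ≤ (stringRels 3 ![2, 2, 2, 2]).comap piFree := by
  intro f hf
  rw [AddSubgroup.mem_comap, ← QuotientAddGroup.eq_zero_iff, piFree_mk_eq_zero_iff]
  obtain ⟨⟨h0, h1, -, -⟩, hsum⟩ := (mk_eq_zero_iff f).1 ((QuotientAddGroup.eq_zero_iff f).2 hf)
  exact ⟨h0, h1, hsum⟩

noncomputable def pi : L →+ L :=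
  QuotientAddGroup.map _ _ piFree stringRels_le_comap_piFree

theorem pi_mk (f : Fin 4 →₀ ℤ) : pi f = piFree f := rfl

theorem pi_gen_zero :
    pi (gen 3 ![2, 2, 2, 2] 0) = gen 3 ![2, 2, 2, 2] 0 + gen 3 ![2, 2, 2, 2] 2 := by
  rw [gen, gen, pi_mk, ← QuotientAddGroup.mk_add]
  congr 1
  ext i; fin_cases i <;> simp [piFree]

theorem pi_gen_one :
    pi (gen 3 ![2, 2, 2, 2] 1) = gen 3 ![2, 2, 2, 2] 1 + gen 3 ![2, 2, 2, 2] 3 := by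
  rw [gen, gen, pi_mk, ← QuotientAddGroup.mk_add]
  congr 1
  ext i; fin_cases i <;> simp [piFree]

theorem can_eq : can 3 ![2, 2, 2, 2] = ((single 0 2 : Fin 4 →₀ ℤ) : L) := by
  rw [can, gen, ← QuotientAddGroup.mk_zsmul, smul_single]
  rfl

theorem pi_gen_two : pi (gen 3 ![2, 2, 2, 2] 2) = can 3 ![2, 2, 2, 2] := by
  rw [gen, pi_mk, can_eq]
  congr 1
  ext i; fin_cases i <;> simp [piFree]

theorem pi_gen_three : pi (gen 3 ![2, 2, 2, 2] 3) = can 3 ![2, 2, 2, 2] := by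
  rw [gen, pi_mk, can_eq]
  congr 1
  ext i; fin_cases i <;> simp [piFree]

theorem gen_two_sub_gen_three :
    gen 3 ![2, 2, 2, 2] 2 - gen 3 ![2, 2, 2, 2] 3 = ((single 2 1 - single 3 1 : Fin 4 →₀ ℤ) : L) :=
  rfl

theorem ker_pi :
    pi.ker = AddSubgroup.zmultiples (gen 3 ![2, 2, 2, 2] 2 - gen 3 ![2, 2, 2, 2] 3) := by
  refine le_antisymm (fun q hq => ?_) (AddSubgroup.zmultiples_le.2 ?_)
  · obtain ⟨f, rfl⟩ := QuotientAddGroup.mk_surjective q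
    rw [AddMonoidHom.mem_ker, pi_mk, piFree_mk_eq_zero_iff] at hq
    refine AddSubgroup.mem_zmultiples_iff.2 ⟨f 2, (sub_eq_zero.1 ?_).symm⟩
    rw [gen_two_sub_gen_three, ← QuotientAddGroup.mk_zsmul, ← QuotientAddGroup.mk_sub,
      mk_eq_zero_iff]
    simp only [coe_sub, coe_smul, zsmul_eq_mul, Pi.sub_apply, Pi.mul_apply, Pi.intCast_apply,
      Int.cast_eq, ne_eq, Fin.reduceEq, not_false_eq_true, single_eq_of_ne, single_eq_same,
      sub_self, sub_zero, zero_sub, mul_zero, mul_one, mul_neg, sub_neg_eq_add, dvd_zero, true_and,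
      add_zero]
    omega
  · rw [AddMonoidHom.mem_ker, map_sub, pi_gen_two, pi_gen_three, sub_self]

theorem addOrderOf_gen_two_sub_gen_three :
    addOrderOf (gen 3 ![2, 2, 2, 2] 2 - gen 3 ![2, 2, 2, 2] 3) = 2 := by
  rw [gen_two_sub_gen_three]
  refine addOrderOf_eq_prime ?_ ?_
  · rw [← QuotientAddGroup.mk_nsmul, mk_eq_zero_iff]
    simp
  · rw [Ne, mk_eq_zero_iff]
    simp

end L2222

theorem stmt_17 :
    ∃ π : StringGroup 3 ![2, 2, 2, 2] →+ StringGroup 3 ![2, 2, 2, 2],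
      π (gen 3 ![2, 2, 2, 2] 0) = gen 3 ![2, 2, 2, 2] 0 + gen 3 ![2, 2, 2, 2] 2 ∧
      π (gen 3 ![2, 2, 2, 2] 1) = gen 3 ![2, 2, 2, 2] 1 + gen 3 ![2, 2, 2, 2] 3 ∧
      π (gen 3 ![2, 2, 2, 2] 2) = can 3 ![2, 2, 2, 2] ∧
      π (gen 3 ![2, 2, 2, 2] 3) = can 3 ![2, 2, 2, 2] ∧
      π.ker = AddSubgroup.zmultiples
        (gen 3 ![2, 2, 2, 2] 2 - gen 3 ![2, 2, 2, 2] 3) ∧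
      addOrderOf (gen 3 ![2, 2, 2, 2] 2 - gen 3 ![2, 2, 2, 2] 3) = 2 := by
  exact ⟨L2222.pi, L2222.pi_gen_zero, L2222.pi_gen_one, L2222.pi_gen_two,
    L2222.pi_gen_three, L2222.ker_pi, L2222.addOrderOf_gen_two_sub_gen_three⟩
end
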